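/- For t in (0,1), the third moment Σ_{k≥1} k³·(k^{k-2}/k!)·t^{k-1}·e^{-kt} equals 1/(1−t)³. -/

import Mathlib

/-!
Put `x = t e^{-t}`. Up to the factor `t⁻¹` the sum is `∑ₖ kᵏ⁺¹/k! xᵏ`, a power series of radius
`e⁻¹`, and `t e^{-t} < e⁻¹` for `t < 1`; so both sides of `∑ₖ kᵏ⁺¹/k! (t e^{-t})ᵏ = t/(1-t)³` are
real analytic on `(0,1)` and it suffices to prove the identity for small `t`. There, expanding
`e^{-kt}` gives an absolutely convergent double series. Its coefficient of `tⁿ` is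
`(1/n!) ∑ₖ (-1)ⁿ⁻ᵏ C(n,k) kⁿ⁺¹`, the `n`-th forward difference of `x ↦ xⁿ⁺¹` at `0` divided by
`n!`, which is `C(n+1,2)`; and `∑ₙ C(n+1,2) tⁿ = t/(1-t)³`.
-/

open Real Finset FormalMultilinearSeries Set
open scoped Nat Topology

theorem fwdDiff_iter_pow_succ_apply_zero {R : Type*} [CommRing R] (n : ℕ) :
    (fwdDiff 1)^[n] (fun r : R ↦ r ^ (n + 1)) 0 = ((n + 1).choose 2 * n ! : ℕ) := by
  induction n with
  | zero => simp
  | succ n ih =>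
    -- `Δ` lowers the degree, so `Δⁿ` kills every term of `Δ xⁿ⁺² = ∑ C(n+2,i) xⁱ` but the top two.
    have hΔ : (fwdDiff 1 fun r : R ↦ r ^ (n + 2)) =
        ∑ i ∈ range (n + 2), (n + 2).choose i • fun r ↦ r ^ i := by
      ext x
      simp [nsmul_eq_mul, fwdDiff, add_pow, sum_range_succ, mul_comm]
    have hchoose : (n + 1).choose 2 * 2 = (n + 1) * n := by
      rw [Nat.choose_two_right]; exact Nat.div_mul_cancel (Nat.even_mul_pred_self (n + 1)).two_dvd
    rw [Function.iterate_succ_apply, hΔ, fwdDiff_iter_finsetSum, Finset.sum_apply, sum_range_succ,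
      sum_range_succ, sum_eq_zero fun i hi ↦ ?_, fwdDiff_iter_const_smul, fwdDiff_iter_const_smul]
    · simp only [Pi.smul_apply, ih, fwdDiff_iter_eq_factorial, Pi.natCast_apply, nsmul_eq_mul]
      norm_cast
      congr 1
      rw [zero_add, Nat.choose_succ_self_right, Nat.choose_symm_add,
        Nat.choose_succ_succ' (n + 1) 1, Nat.choose_one_right, Nat.factorial_succ]
      linear_combination n ! * hchoose
    · rw [fwdDiff_iter_const_smul, fwdDiff_iter_pow_eq_zero_of_lt (mem_range.mp hi)]
      simp

theorem sum_range_neg_one_pow_mul_choose_mul_pow_succ {R : Type*} [CommRing R] (n : ℕ) :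
    ∑ k ∈ range (n + 1), (-1 : R) ^ (n - k) * n.choose k * (k : R) ^ (n + 1) =
      (n + 1).choose 2 * n ! := by
  have h := fwdDiff_iter_pow_succ_apply_zero (R := R) n
  rw [fwdDiff_iter_eq_sum_shift] at h
  simpa using h

theorem Real.hasSum_pow_div_factorial (x : ℝ) : HasSum (fun n ↦ x ^ n / n !) (exp x) := by
  rw [exp_eq_exp_ℝ]; exact NormedSpace.expSeries_div_hasSum_exp x

theorem tsum_prod_eq_tsum_sum_antidiagonal {A α : Type*} [AddMonoid A] [HasAntidiagonal A]
    [AddCommMonoid α] [TopologicalSpace α] [ContinuousAdd α] [T3Space α] {F : A × A → α}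
    (hF : Summable F) :
    ∑' p, F p = ∑' n, ∑ p ∈ antidiagonal n, F p := by
  rw [← HasAntidiagonal.sigmaAntidiagonalEquivProd.tsum_eq F]
  refine Summable.tsum_sigma' (fun n ↦ (hasSum_fintype _).summable)
    (HasAntidiagonal.sigmaAntidiagonalEquivProd.summable_iff.mpr hF) |>.trans ?_
  exact tsum_congr fun n ↦ (sum_finset_coe (fun p ↦ F p) _).symm ▸ tsum_fintype _

theorem tsum_mul_exp_eq_tsum_sum_antidiagonal {c u : ℕ → ℝ}
    (h : Summable fun k ↦ |c k| * exp |u k|) :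
    ∑' k, c k * exp (u k) = ∑' n, ∑ p ∈ antidiagonal n, c p.1 * (u p.1 ^ p.2 / p.2 !) := by
  set F : ℕ × ℕ → ℝ := fun p ↦ c p.1 * (u p.1 ^ p.2 / p.2 !)
  have hrow (k : ℕ) : HasSum (fun j ↦ F (k, j)) (c k * exp (u k)) :=
    (hasSum_pow_div_factorial (u k)).mul_left (c k)
  have hnorm (p : ℕ × ℕ) : ‖F p‖ = |c p.1| * (|u p.1| ^ p.2 / p.2 !) := by
    simp [F]
  have hF : Summable F := by
    refine Summable.of_norm
      ((summable_prod_of_nonneg fun _ ↦ norm_nonneg _).mpr ⟨fun k ↦ ?_, ?_⟩)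
    · simp_rw [hnorm]; exact (hasSum_pow_div_factorial _).summable.mul_left _
    · simpa [hnorm, tsum_mul_left, (hasSum_pow_div_factorial _).tsum_eq] using h
  calc ∑' k, c k * exp (u k)
      = ∑' k, ∑' j, F (k, j) := tsum_congr fun k ↦ (hrow k).tsum_eq.symm
    _ = ∑' p, F p := (hF.tsum_prod' fun k ↦ (hrow k).summable).symm
    _ = _ := tsum_prod_eq_tsum_sum_antidiagonal hF

theorem tsum_choose_two_mul_pow {𝕜 : Type*} [NormedField 𝕜] [HasSummableGeomSeries 𝕜]
    {t : 𝕜} (ht : ‖t‖ < 1) : ∑' n : ℕ, ((n + 1).choose 2 : 𝕜) * t ^ n = t / (1 - t) ^ 3 := by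
  have h := (hasSum_choose_mul_geometric_of_norm_lt_one 2 ht).mul_left t
  have hf : (fun n : ℕ ↦ t * (((n + 2).choose 2 : ℕ) * t ^ n)) =
      fun n ↦ ((n + 1 + 1).choose 2 : 𝕜) * t ^ (n + 1) := by
    ext n
    rw [pow_succ]
    ring
  rw [hf, mul_one_div] at h
  have := (HasSum.zero_add (f := fun n : ℕ ↦ ((n + 1).choose 2 : 𝕜) * t ^ n) h).tsum_eq
  rw [zero_add, Nat.choose_eq_zero_of_lt one_lt_two] at this
  simpa using this

noncomputable def treeCoeff (k : ℕ) : ℝ := (k : ℝ) ^ (k + 1) / k !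

theorem treeCoeff_nonneg (k : ℕ) : 0 ≤ treeCoeff k := by unfold treeCoeff; positivity

theorem treeCoeff_le (k : ℕ) : treeCoeff k ≤ k * exp 1 ^ k := by
  rw [treeCoeff, pow_succ', mul_div_assoc, exp_one_pow]
  exact mul_le_mul_of_nonneg_left (pow_div_factorial_le_exp _ k.cast_nonneg k) k.cast_nonneg

theorem summable_treeCoeff_mul_pow {x : ℝ} (hx : 0 ≤ x) (hex : exp 1 * x < 1) :
    Summable fun k ↦ treeCoeff k * x ^ k := by
  refine Summable.of_nonneg_of_le (fun k ↦ by have := treeCoeff_nonneg k; positivity)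
    (fun k ↦ ?_) (summable_pow_mul_geometric_of_norm_lt_one 1 (r := exp 1 * x) ?_)
  · grw [treeCoeff_le, mul_pow]; simp [mul_assoc]
  · rwa [norm_of_nonneg (by positivity)]

theorem sum_antidiagonal_treeCoeff (t : ℝ) (n : ℕ) :
    ∑ p ∈ antidiagonal n, treeCoeff p.1 * t ^ p.1 * ((-(p.1 * t)) ^ p.2 / p.2 !) =
      (n + 1).choose 2 * t ^ n := by
  rw [Nat.sum_antidiagonal_eq_sum_range_succ_mk]
  have hterm (k : ℕ) (hk : k ∈ range (n + 1)) :
      treeCoeff k * t ^ k * ((-(k * t)) ^ (n - k) / (n - k)!) =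
        t ^ n / n ! * ((-1) ^ (n - k) * n.choose k * (k : ℝ) ^ (n + 1)) := by
    have hkn : k ≤ n := Nat.lt_succ_iff.mp (mem_range.mp hk)
    rw [treeCoeff, Nat.cast_choose ℝ hkn, ← Nat.sub_add_cancel hkn]
    simp only [Nat.add_sub_cancel, neg_mul_eq_neg_mul, mul_pow, pow_add]
    field_simp
    ring
  rw [sum_congr rfl hterm, ← mul_sum, sum_range_neg_one_pow_mul_choose_mul_pow_succ]
  field_simp

theorem tsum_treeCoeff_mul_pow_of_lt {t : ℝ} (h0 : 0 ≤ t) (ht : t < 1 / 8) :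
    ∑' k, treeCoeff k * (t * exp (-t)) ^ k = t / (1 - t) ^ 3 := by
  have hpow (k : ℕ) : (t * exp (-t)) ^ k = t ^ k * exp (-(k * t)) := by
    rw [mul_pow, ← exp_nat_mul, mul_neg]
  -- `e · t e^{t} < 1` is what makes the expanded double series absolutely convergent.
  have hρ : exp 1 * (t * exp t) < 1 := by
    have he : exp 1 < 2.7182818286 := exp_one_lt_d9
    have het : exp t < exp 1 := exp_lt_exp.mpr (by linarith)
    have h8 : exp 1 * exp t < 8 := by nlinarith [exp_pos t]
    nlinarith [exp_pos 1, exp_pos t]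
  have habs : Summable fun k ↦ |treeCoeff k * t ^ k| * exp |-(k * t)| := by
    refine (summable_treeCoeff_mul_pow (by positivity) hρ).congr fun k ↦ ?_
    rw [abs_of_nonneg (by have := treeCoeff_nonneg k; positivity), abs_neg,
      abs_of_nonneg (by positivity), mul_pow, exp_nat_mul, mul_assoc]
  calc ∑' k, treeCoeff k * (t * exp (-t)) ^ k
      = ∑' k, treeCoeff k * t ^ k * exp (-(k * t)) := by simp_rw [hpow, mul_assoc]
    _ = ∑' n : ℕ, ((n + 1).choose 2 : ℝ) * t ^ n := by
      rw [tsum_mul_exp_eq_tsum_sum_antidiagonal habs]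
      exact tsum_congr (sum_antidiagonal_treeCoeff t)
    _ = t / (1 - t) ^ 3 := tsum_choose_two_mul_pow (by rw [norm_of_nonneg h0]; linarith)

theorem mul_exp_neg_lt_exp_neg_one {s : ℝ} (hs : s < 1) : s * exp (-s) < exp (-1) := by
  have h := add_one_lt_exp (sub_ne_zero.mpr hs.ne)
  calc s * exp (-s) < exp (s - 1) * exp (-s) := by gcongr; linarith
    _ = exp (-1) := by rw [← exp_add]; ring_nf

theorem ofReal_exp_neg_one_le_radius_treeCoeff :
    ENNReal.ofReal (exp (-1)) ≤ (ofScalars ℝ treeCoeff).radius := by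
  refine ENNReal.le_of_forall_nnreal_lt fun r hr ↦ le_radius_of_summable_norm _ ?_
  have hr' : exp 1 * r < 1 := by
    rw [ENNReal.coe_lt_ofReal] at hr
    calc exp 1 * r < exp 1 * exp (-1) := by gcongr
      _ = 1 := by rw [← exp_add]; simp
  simpa [ofScalars_norm, abs_of_nonneg (treeCoeff_nonneg _)] using
    summable_treeCoeff_mul_pow r.coe_nonneg hr'

theorem tsum_treeCoeff_mul_pow {t : ℝ} (ht : t ∈ Ioo (0 : ℝ) 1) :
    ∑' k, treeCoeff k * (t * exp (-t)) ^ k = t / (1 - t) ^ 3 := by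
  set p := ofScalars ℝ treeCoeff
  have hsum (s : ℝ) : p.sum (s * exp (-s)) = ∑' k, treeCoeff k * (s * exp (-s)) ^ k :=
    ofScalars_sum_eq treeCoeff _
  have hL : AnalyticOnNhd ℝ (fun s ↦ p.sum (s * exp (-s))) (Ioo 0 1) := fun s hs ↦ by
    have hmem : s * exp (-s) ∈ Metric.eball (0 : ℝ) p.radius := by
      rw [Metric.mem_eball, edist_zero_right, ← ofReal_norm,
        norm_of_nonneg (by have := hs.1; positivity)]
      exact ((ENNReal.ofReal_lt_ofReal_iff (exp_pos _)).mpr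
        (mul_exp_neg_lt_exp_neg_one hs.2)).trans_le ofReal_exp_neg_one_le_radius_treeCoeff
    have hrad : 0 < p.radius := zero_le.trans_lt (Metric.mem_eball.mp hmem)
    exact ((p.hasFPowerSeriesOnBall hrad).analyticAt_of_mem hmem).comp
      (f := fun u ↦ u * exp (-u)) (by fun_prop)
  have hR : AnalyticOnNhd ℝ (fun s : ℝ ↦ s / (1 - s) ^ 3) (Ioo 0 1) := fun s hs ↦
    analyticAt_id.div ((analyticAt_const.sub analyticAt_id).pow 3)
      (pow_ne_zero 3 (sub_ne_zero.mpr hs.2.ne'))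
  have hsmall : (fun s ↦ p.sum (s * exp (-s))) =ᶠ[𝓝 (1 / 16)] fun s ↦ s / (1 - s) ^ 3 := by
    filter_upwards [Ioo_mem_nhds (show (0 : ℝ) < 1 / 16 by norm_num)
      (show (1 : ℝ) / 16 < 1 / 8 by norm_num)] with s hs
    rw [hsum, tsum_treeCoeff_mul_pow_of_lt hs.1.le hs.2]
  rw [← hsum]
  exact hL.eqOn_of_preconnected_of_eventuallyEq hR (convex_Ioo 0 1).isPreconnected (by norm_num)
    hsmall ht

theorem cube_mul_treeDensity_eq {t : ℝ} (ht : t ≠ 0) (k : ℕ) :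
    (k : ℝ) ^ 3 * ((k : ℝ) ^ (k - 2) / k ! * t ^ (k - 1) * exp (-(k : ℝ) * t)) =
      treeCoeff k * (t * exp (-t)) ^ k / t := by
  rw [mul_pow, ← exp_nat_mul, treeCoeff]
  match k with
  | 0 => simp
  | 1 => field_simp; ring_nf
  | k + 2 =>
    simp only [Nat.add_sub_cancel, Nat.add_succ_sub_one]
    field_simp
    ring_nf

theorem stmt_5 (t : ℝ) (h0 : 0 < t) (h1 : t < 1) :
    ∑' k : ℕ, (k : ℝ) ^ 3 * ((k : ℝ) ^ (k - 2) / (Nat.factorial k) * t ^ (k - 1)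
      * Real.exp (-(k : ℝ) * t)) = 1 / (1 - t) ^ 3 := by
  simp_rw [cube_mul_treeDensity_eq h0.ne']
  rw [tsum_div_const, tsum_treeCoeff_mul_pow ⟨h0, h1⟩]
  field_simp
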